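/- arXiv:2410.06869 — 3 statements merged into one kernel-verified Lean document; each statement's English description precedes it below -/
import Mathlib

section
/- Let T be a densely defined closed EP operator on a complex Hilbert space H, and let S be a bounded operator on H. Let T† be the (bounded) Moore–Penrose inverse of T, i.e., the bounded operator on H satisfying T†y = 0 for all y ∈ R(T)ᗮ and T†(Tx) = x for all x ∈ D(T) ∩ (ker T)ᗮ. Then S commutes with T in the sense that for every x ∈ D(T) one has Sx ∈ D(T) and T(Sx) = S(Tx) (i.e., ST ⊆ TS), if and only if S ∘ T† = T† ∘ S. -/
open LinearPMap

variable {H : Type*} [NormedAddCommGroup H] [InnerProductSpace ℂ H] [CompleteSpace H]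

/-- The range of a densely defined (partial) operator, as a submodule of `H`. -/
noncomputable def pmRange (T : H →ₗ.[ℂ] H) : Submodule ℂ H := LinearMap.range T.toFun

/-- The kernel of a densely defined (partial) operator, as a submodule of `H`. -/
noncomputable def pmKer (T : H →ₗ.[ℂ] H) : Submodule ℂ H :=
  (LinearMap.ker T.toFun).map T.domain.subtype

local notation "⟪" x ", " y "⟫" => @inner ℂ _ _ x y

lemma mem_pmRange' {T : H →ₗ.[ℂ] H} (x : T.domain) : T x ∈ pmRange T :=
  ⟨x, rfl⟩

lemma pmKer_le_orth (T : H →ₗ.[ℂ] H) (hdense : Dense (T.domain : Set H))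
    (hEP : pmRange T = pmRange T.adjoint) : pmKer T ≤ (pmRange T)ᗮ := by
  rintro n hn
  obtain ⟨n', hn'0, rfl⟩ := Submodule.mem_map.mp hn
  rw [Submodule.mem_orthogonal]
  intro y hy
  rw [hEP] at hy
  obtain ⟨w, rfl⟩ := hy
  have h1 := adjoint_isFormalAdjoint hdense w n'
  have h2 : T n' = 0 := hn'0
  rw [h2, inner_zero_right] at h1
  exact h1

lemma orth_le_pmKer (T : H →ₗ.[ℂ] H) (hdense : Dense (T.domain : Set H))
    (hclosed : IsClosed (T.graph : Set (H × H)))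
    (hEP : pmRange T = pmRange T.adjoint) : (pmRange T)ᗮ ≤ pmKer T := by
  intro x hx
  set e : WithLp 2 (H × H) ≃L[ℂ] H × H := WithLp.prodContinuousLinearEquiv 2 ℂ H H with he
  set G : Submodule ℂ (WithLp 2 (H × H)) :=
    T.graph.comap (e.toLinearEquiv : WithLp 2 (H × H) →ₗ[ℂ] H × H) with hG
  have hGclosed : IsClosed (G : Set (WithLp 2 (H × H))) := hclosed.preimage e.continuous
  have hGG : Gᗮᗮ = G := by
    rw [Submodule.orthogonal_orthogonal_eq_closure]
    exact hGclosed.submodule_topologicalClosure_eq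
  have hmem : (e.symm (x, 0)) ∈ G := by
    rw [← hGG, Submodule.mem_orthogonal]
    intro u hu
    have hu' : ∀ g ∈ G, ⟪g, u⟫ = 0 := (Submodule.mem_orthogonal G u).mp hu
    have hpair : ∀ z : T.domain, ⟪(z : H), (e u).1⟫ + ⟪T z, (e u).2⟫ = 0 := by
      intro z
      have hg : e.symm ((z : H), T z) ∈ G := by
        rw [hG, Submodule.mem_comap]
        show e (e.symm ((z : H), T z)) ∈ T.graph
        rw [e.apply_symm_apply]
        exact T.mem_graph z
      have := hu' _ hg
      rw [WithLp.prod_inner_apply] at this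
      convert this using 2 <;>
        simp [e.symm_apply_eq, he]
    have hw : ∀ z : T.domain, ⟪-(e u).1, (z : H)⟫ = ⟪(e u).2, T z⟫ := by
      intro z
      have h0 := hpair z
      have h1 : ⟪(z : H), (e u).1⟫ = -⟪T z, (e u).2⟫ := by linear_combination h0
      have h2 := congrArg (starRingEnd ℂ) h1
      rw [inner_conj_symm, _root_.map_neg, inner_conj_symm] at h2
      rw [inner_neg_left, h2, neg_neg]
    have hu2 : (e u).2 ∈ T.adjoint.domain :=
      mem_adjoint_domain_of_exists _ ⟨-(e u).1, hw⟩
    have hval : T.adjoint ⟨(e u).2, hu2⟩ = -(e u).1 :=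
      adjoint_apply_eq hdense _ (fun z => hw z)
    have hu1R : (e u).1 ∈ pmRange T := by
      rw [hEP]
      refine ⟨-⟨(e u).2, hu2⟩, ?_⟩
      show T.adjoint (-⟨(e u).2, hu2⟩) = (e u).1
      rw [LinearPMap.map_neg, hval, neg_neg]
    have hinner : ⟪(e u).1, x⟫ = 0 := (Submodule.mem_orthogonal _ _).mp hx _ hu1R
    rw [WithLp.prod_inner_apply]
    have hfst : (WithLp.ofLp (e.symm (x, 0) : WithLp 2 (H × H))).1 = x := rfl
    have hsnd : (WithLp.ofLp (e.symm (x, 0) : WithLp 2 (H × H))).2 = (0 : H) := rfl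
    rw [hfst, hsnd, inner_zero_right, add_zero]
    show ⟪(e u).1, x⟫ = 0
    exact hinner
  have hgraph : ((x, (0 : H)) : H × H) ∈ T.graph := by
    have : e (e.symm (x, 0)) ∈ T.graph := hmem
    rwa [e.apply_symm_apply] at this
  rw [T.mem_graph_iff] at hgraph
  obtain ⟨y, hy1, hy2⟩ := hgraph
  exact Submodule.mem_map.mpr ⟨y, LinearMap.mem_ker.mpr hy2, hy1⟩

lemma range_le_ker_orth (T : H →ₗ.[ℂ] H) (hdense : Dense (T.domain : Set H))
    (hEP : pmRange T = pmRange T.adjoint) : pmRange T ≤ (pmKer T)ᗮ :=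
  le_trans (Submodule.le_orthogonal_orthogonal _)
    (Submodule.orthogonal_le (pmKer_le_orth T hdense hEP))

section Main

variable (T : H →ₗ.[ℂ] H) (S Tdag : H →L[ℂ] H)
variable (hdense : Dense (T.domain : Set H))
variable (hclosed : IsClosed (T.graph : Set (H × H)))
variable (hEPclosed : IsClosed ((pmRange T : Submodule ℂ H) : Set H))
variable (hEP : pmRange T = pmRange T.adjoint)
variable (hdag0 : ∀ y ∈ (pmRange T)ᗮ, Tdag y = 0)
variable (hdagT : ∀ x : T.domain, (x : H) ∈ (pmKer T)ᗮ → Tdag (T x) = (x : H))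

include hdense hclosed hEPclosed hEP hdagT in
/-- For `y` in the range of `T`, `Tdag y` lies in `D(T) ∩ R(T)` and `T (Tdag y) = y`. -/
lemma tdag_spec : ∀ y ∈ pmRange T, ∃ r : T.domain,
    (r : H) = Tdag y ∧ T r = y ∧ Tdag y ∈ pmRange T := by
  haveI : CompleteSpace (pmRange T) := hEPclosed.completeSpace_coe
  rintro y ⟨x, rfl⟩
  set r0 : H := (Submodule.orthogonalProjection (pmRange T) (x : H) : H) with hr0
  have hn : (x : H) - r0 ∈ (pmRange T)ᗮ := Submodule.sub_starProjection_mem_orthogonal _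
  obtain ⟨n', hn'ker, hn'⟩ := Submodule.mem_map.mp (orth_le_pmKer T hdense hclosed hEP hn)
  set r : T.domain := x - n' with hr
  have hrc : (r : H) = r0 := by
    have hn'' : (n' : H) = (x : H) - r0 := hn'
    rw [hr]
    push_cast
    rw [hn'']
    abel
  have hTn' : T n' = 0 := hn'ker
  have hTr : T r = T x := by rw [hr, LinearPMap.map_sub, hTn', sub_zero]
  have hr_orth : (r : H) ∈ (pmKer T)ᗮ := by
    apply range_le_ker_orth T hdense hEP
    rw [hrc]
    exact Submodule.coe_mem _
  have hdag := hdagT r hr_orth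
  rw [hTr] at hdag
  refine ⟨r, hdag.symm, hTr, ?_⟩
  show Tdag (T x) ∈ pmRange T
  rw [hdag, hrc]
  exact Submodule.coe_mem _

include hdag0 in
lemma tdag_proj [CompleteSpace (pmRange T)] : ∀ y : H,
    Tdag y = Tdag ((Submodule.orthogonalProjection (pmRange T) y : H)) := by
  intro y
  have h0 : Tdag (y - (Submodule.orthogonalProjection (pmRange T) y : H)) = 0 :=
    hdag0 _ (Submodule.sub_starProjection_mem_orthogonal _)
  rw [_root_.map_sub, sub_eq_zero] at h0
  exact h0

include hdense hclosed hEPclosed hEP hdag0 hdagT in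
lemma tdag_mem_range : ∀ y : H, Tdag y ∈ pmRange T := by
  haveI : CompleteSpace (pmRange T) := hEPclosed.completeSpace_coe
  intro y
  rw [tdag_proj T Tdag hdag0 y]
  obtain ⟨r, -, -, h⟩ := tdag_spec T Tdag hdense hclosed hEPclosed hEP hdagT
    ((Submodule.orthogonalProjection (pmRange T) y : H)) (Submodule.coe_mem _)
  exact h

include hdense hclosed hEPclosed hEP hdag0 hdagT in
lemma S_range_sub (hcomm : ∀ y : H, S (Tdag y) = Tdag (S y)) :
    ∀ y ∈ pmRange T, S y ∈ pmRange T := by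
  haveI : CompleteSpace (pmRange T) := hEPclosed.completeSpace_coe
  set R := pmRange T with hR
  set P : H →L[ℂ] H := R.subtypeL.comp (Submodule.orthogonalProjection R) with hP
  have hPD : ∀ d ∈ (T.domain : Set H), S (P d) ∈ R := by
    intro d hd
    have hn : d - P d ∈ Rᗮ := Submodule.sub_starProjection_mem_orthogonal _
    obtain ⟨n', hn'ker, hn'⟩ := Submodule.mem_map.mp (orth_le_pmKer T hdense hclosed hEP hn)
    set x : T.domain := ⟨d, hd⟩ with hx
    set r : T.domain := x - n' with hr
    have hrc : (r : H) = P d := by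
      have hn'' : (n' : H) = d - P d := hn'
      rw [hr]
      push_cast
      rw [hn'']
      show d - (d - P d) = P d
      abel
    have hr_orth : (r : H) ∈ (pmKer T)ᗮ := by
      apply range_le_ker_orth T hdense hEP
      rw [hrc]
      exact Submodule.coe_mem _
    have hdag := hdagT r hr_orth
    rw [hrc] at hdag
    rw [← hdag, hcomm]
    exact tdag_mem_range T Tdag hdense hclosed hEPclosed hEP hdag0 hdagT _
  intro y hy
  have hyc : y ∈ closure (P '' (T.domain : Set H)) := by
    have h1 : P y = y := by
      show ((Submodule.orthogonalProjection R y : H)) = y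
      exact Submodule.starProjection_eq_self_iff.mpr hy
    have h2 : y ∈ closure (T.domain : Set H) := hdense y
    have := (image_closure_subset_closure_image P.continuous) ⟨y, h2, h1⟩
    exact this
  have hSy : S y ∈ closure (S '' (P '' (T.domain : Set H))) :=
    (image_closure_subset_closure_image S.continuous) ⟨y, hyc, rfl⟩
  have hsub : S '' (P '' (T.domain : Set H)) ⊆ (R : Set H) := by
    rintro _ ⟨_, ⟨d, hd, rfl⟩, rfl⟩
    exact hPD d hd
  have := closure_mono hsub hSy
  rwa [hEPclosed.closure_eq] at this

include hdense hclosed hEPclosed hEP hdag0 hdagT in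
theorem stmt3' :
    (∀ x : T.domain, ∃ h : S (x : H) ∈ T.domain, T ⟨S (x : H), h⟩ = S (T x)) ↔
      S ∘L Tdag = Tdag ∘L S := by
  haveI : CompleteSpace (pmRange T) := hEPclosed.completeSpace_coe
  set R := pmRange T with hR
  constructor
  · intro hST
    ext y
    show S (Tdag y) = Tdag (S y)
    set r0 : H := (Submodule.orthogonalProjection R y : H) with hr0
    have hy : y - r0 ∈ Rᗮ := Submodule.sub_starProjection_mem_orthogonal _
    -- S maps Rᗮ into Rᗮ
    have hSN : S (y - r0) ∈ Rᗮ := by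
      obtain ⟨n', hn'ker, hn'⟩ := Submodule.mem_map.mp (orth_le_pmKer T hdense hclosed hEP hy)
      obtain ⟨h, hTh⟩ := hST n'
      apply pmKer_le_orth T hdense hEP
      refine Submodule.mem_map.mpr ⟨⟨S (n' : H), h⟩, LinearMap.mem_ker.mpr ?_, ?_⟩
      · show T _ = 0
        rw [hTh]
        have : T n' = 0 := hn'ker
        rw [this]
        exact map_zero S
      · show S (n' : H) = S (y - r0)
        rw [show ((n' : H)) = y - r0 from hn']
    obtain ⟨r, hrc, hTr, hmem⟩ := tdag_spec T Tdag hdense hclosed hEPclosed hEP hdagT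
      r0 (Submodule.coe_mem _)
    have h1 : Tdag y = (r : H) := by
      rw [tdag_proj T Tdag hdag0 y, ← hr0, hrc]
    obtain ⟨h2, hTh2⟩ := hST r
    have hSy : S y = S (y - r0) + T ⟨S (r : H), h2⟩ := by
      rw [hTh2, hTr, _root_.map_sub]
      abel
    have hTdagSr : Tdag (T ⟨S (r : H), h2⟩) = S (r : H) := by
      apply hdagT
      apply range_le_ker_orth T hdense hEP
      show S (r : H) ∈ R
      have hrR : (r : H) ∈ pmRange T := by rw [hrc]; exact hmem
      obtain ⟨w, hw⟩ := hrR
      obtain ⟨h3, hTh3⟩ := hST w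
      have hw' : T w = (r : H) := hw
      have : S (r : H) = T ⟨S (w : H), h3⟩ := by rw [hTh3, hw']
      rw [this]
      exact mem_pmRange' _
    rw [hSy, _root_.map_add, hdag0 _ hSN, zero_add, hTdagSr, h1]
  · intro hcomm
    have hc : ∀ y : H, S (Tdag y) = Tdag (S y) := fun y => by
      simpa using ContinuousLinearMap.ext_iff.mp hcomm y
    intro x
    set r0 : H := (Submodule.orthogonalProjection R (x : H) : H) with hr0
    have hn : (x : H) - r0 ∈ Rᗮ := Submodule.sub_starProjection_mem_orthogonal _
    obtain ⟨n', hn'ker, hn'⟩ := Submodule.mem_map.mp (orth_le_pmKer T hdense hclosed hEP hn)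
    set r : T.domain := x - n' with hr
    have hrc : (r : H) = r0 := by
      have hn'' : (n' : H) = (x : H) - r0 := hn'
      rw [hr]; push_cast; rw [hn'']; abel
    have hTn' : T n' = 0 := hn'ker
    have hTr : T r = T x := by rw [hr, LinearPMap.map_sub, hTn', sub_zero]
    have hr_orth : (r : H) ∈ (pmKer T)ᗮ := by
      apply range_le_ker_orth T hdense hEP
      rw [hrc]; exact Submodule.coe_mem _
    have hdagr : Tdag (T r) = (r : H) := hdagT r hr_orth
    -- S (x - r0) ∈ Rᗮ ⊆ pmKer T
    have hSn_ker : S ((x : H) - r0) ∈ pmKer T := by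
      apply orth_le_pmKer T hdense hclosed hEP
      -- show S (x - r0) ∈ Rᗮ : Tdag of it is 0, and ker Tdag ⊆ Rᗮ
      have h0 : Tdag (S ((x : H) - r0)) = 0 := by
        rw [← hc, hdag0 _ hn, _root_.map_zero]
      -- decompose S (x - r0)
      set z := S ((x : H) - r0) with hz
      set z0 : H := (Submodule.orthogonalProjection R z : H) with hz0
      have hzn : z - z0 ∈ Rᗮ := Submodule.sub_starProjection_mem_orthogonal _
      obtain ⟨q, hqc, hTq, -⟩ := tdag_spec T Tdag hdense hclosed hEPclosed hEP hdagT
        z0 (Submodule.coe_mem _)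
      have hTdz : Tdag z = (q : H) := by
        rw [tdag_proj T Tdag hdag0 z, ← hz0, hqc]
      rw [h0] at hTdz
      have hq0 : (q : H) = 0 := hTdz.symm
      have hz0eq : z0 = 0 := by
        rw [← hTq]
        have : q = 0 := Subtype.ext hq0
        rw [this, LinearPMap.map_zero]
      have : z - z0 = z := by rw [hz0eq, sub_zero]
      rwa [this] at hzn
    obtain ⟨m, hm_ker, hm⟩ := Submodule.mem_map.mp hSn_ker
    -- S ↑r
    have hSr : S (r : H) = Tdag (S (T r)) := by rw [← hdagr, hc]
    have hSTr_mem : S (T r) ∈ R :=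
      S_range_sub T S Tdag hdense hclosed hEPclosed hEP hdag0 hdagT hc _ (mem_pmRange' r)
    obtain ⟨q, hqc, hTq, -⟩ := tdag_spec T Tdag hdense hclosed hEPclosed hEP hdagT
      (S (T r)) hSTr_mem
    -- S x = ↑m + ↑q
    have hm' : (m : H) = S ((x : H) - r0) := hm
    have hSx : S (x : H) = ((m + q : T.domain) : H) := by
      push_cast
      rw [hm', hqc, ← hSr]
      have hxdec : (x : H) = ((x : H) - r0) + (r : H) := by rw [hrc]; abel
      conv_lhs => rw [hxdec]
      rw [_root_.map_add]
    refine ⟨hSx ▸ (m + q).2, ?_⟩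
    have heq : (⟨S (x : H), hSx ▸ (m + q).2⟩ : T.domain) = m + q := Subtype.ext hSx
    rw [heq, LinearPMap.map_add]
    have hTm : T m = 0 := hm_ker
    rw [hTm, hTq, zero_add, ← hTr]

end Main

/-- Let `T` be a densely defined closed EP operator on a complex Hilbert space `H` and let
`S` be a bounded operator on `H`.  Let `Tdag` be the (bounded) Moore–Penrose inverse of `T`,
i.e. `Tdag y = 0` for `y ∈ R(T)ᗮ` and `Tdag (T x) = x` for `x ∈ D(T) ∩ (ker T)ᗮ`.  Then
`S T ⊆ T S` (i.e. for every `x ∈ D(T)`, `S x ∈ D(T)` and `T (S x) = S (T x)`) if and only if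
`S ∘ Tdag = Tdag ∘ S`. -/
theorem stmt3 (T : H →ₗ.[ℂ] H) (S Tdag : H →L[ℂ] H)
    (hdense : Dense (T.domain : Set H))
    (hclosed : IsClosed (T.graph : Set (H × H)))
    (hEPclosed : IsClosed ((pmRange T : Submodule ℂ H) : Set H))
    (hEP : pmRange T = pmRange T.adjoint)
    (hdag0 : ∀ y ∈ (pmRange T)ᗮ, Tdag y = 0)
    (hdagT : ∀ x : T.domain, (x : H) ∈ (pmKer T)ᗮ → Tdag (T x) = (x : H)) :
    (∀ x : T.domain, ∃ h : S (x : H) ∈ T.domain, T ⟨S (x : H), h⟩ = S (T x)) ↔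
      S ∘L Tdag = Tdag ∘L S :=
  stmt3' T S Tdag hdense hclosed hEPclosed hEP hdag0 hdagT
end

section
/- Let T be a densely defined closed EP operator on a complex Hilbert space H, let S be a bounded EP operator on H, and suppose there exists a real number a with 0 < a < 1 such that ‖Sx‖ ≤ a‖Tx‖ for all x ∈ D(T). Then the sum T + S, defined on the domain D(T) by x ↦ Tx + Sx, is a closed operator with closed range and R(T + S) ⊆ R((T + S)*); that is, T + S is hypo-EP. -/
open LinearPMap

variable {H : Type*} [NormedAddCommGroup H] [InnerProductSpace ℂ H] [CompleteSpace H]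

noncomputable def pmAddL (T : H →ₗ.[ℂ] H) (S : H →L[ℂ] H) : H →ₗ.[ℂ] H where
  domain := T.domain
  toFun := T.toFun + (S : H →ₗ[ℂ] H) ∘ₗ T.domain.subtype

/-! On `D(A) ∩ (ker A)ᗮ` a closed operator `A` is injective with the same range, and its graph
there is a Banach space; so `A` has closed range iff `‖x‖ ≤ C ‖A x‖` on `D(A) ∩ (ker A)ᗮ`
(an injective bounded operator has closed range iff it is antilipschitz). Since
`‖(T + S) x‖ ≥ (1 - a) ‖T x‖`, the operators `T + S` and `T` have the same kernel and `T + S`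
inherits such a bound from `T`. Inverting a closed operator `A` with closed range on its range and
applying the Riesz representation theorem puts every vector orthogonal to `ker A` into `R(A*)`.
Finally `R(T + S) ⊆ R(T) + R(S) = R(T*) + R(S*)`, and both summands are orthogonal to
`ker T = ker (T + S)`. -/

namespace LinearPMap

section Kernel

variable {R E F : Type*} [CommRing R] [AddCommGroup E] [Module R E] [AddCommGroup F] [Module R F]

def ker (A : E →ₗ.[R] F) : Submodule R E := (LinearMap.ker A.toFun).map A.domain.subtype

theorem coe_mem_ker_iff {A : E →ₗ.[R] F} (x : A.domain) : (x : E) ∈ A.ker ↔ A x = 0 := by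
  refine ⟨?_, fun hx => ⟨x, hx, rfl⟩⟩
  rintro ⟨y, hy, hyx⟩
  rwa [← Subtype.ext hyx]

theorem IsClosed.isClosed_ker [TopologicalSpace E] [TopologicalSpace F] {A : E →ₗ.[R] F}
    (hA : A.IsClosed) : _root_.IsClosed (A.ker : Set E) := by
  have : (A.ker : Set E) = (fun x => (x, (0 : F))) ⁻¹' A.graph := by
    ext x
    simp only [Set.mem_preimage, SetLike.mem_coe, mem_graph_iff]
    exact ⟨fun ⟨y, hy, hyx⟩ => ⟨y, hyx, hy⟩, fun ⟨y, hyx, hy⟩ => ⟨y, hy, hyx⟩⟩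
  rw [this]
  exact hA.preimage (continuous_id.prodMk continuous_const)

end Kernel

section ReducedGraph

variable {𝕜 E F : Type*} [RCLike 𝕜] [NormedAddCommGroup E] [InnerProductSpace 𝕜 E]
  [NormedAddCommGroup F] [NormedSpace 𝕜 F] (A : E →ₗ.[𝕜] F)

def reducedGraph : Submodule 𝕜 (E × F) := A.graph ⊓ A.kerᗮ.prod ⊤

theorem mem_reducedGraph_iff {p : E × F} :
    p ∈ A.reducedGraph ↔ ∃ x : A.domain, (x : E) ∈ A.kerᗮ ∧ ((x : E), A x) = p := by
  simp only [reducedGraph, Submodule.mem_inf, mem_graph_iff', Submodule.mem_prod,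
    Submodule.mem_top, and_true]
  constructor
  · rintro ⟨⟨x, rfl⟩, hx⟩
    exact ⟨x, hx, rfl⟩
  · rintro ⟨x, hx, rfl⟩
    exact ⟨⟨x, rfl⟩, hx⟩

theorem sub_starProjection_mem_reducedGraph [A.ker.HasOrthogonalProjection] (x : A.domain) :
    ((x : E) - A.ker.starProjection x, A x) ∈ A.reducedGraph := by
  obtain ⟨k, hk, hkx⟩ := A.ker.starProjection_apply_mem (x : E)
  have hk0 : A k = 0 := hk
  rw [mem_reducedGraph_iff, ← hkx]
  refine ⟨x - k, ?_, ?_⟩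
  · simpa [← hkx] using A.ker.sub_starProjection_mem_orthogonal (x : E)
  · rw [map_sub, hk0, sub_zero]
    rfl

theorem IsClosed.isClosed_reducedGraph {A : E →ₗ.[𝕜] F} (hA : A.IsClosed) :
    _root_.IsClosed (A.reducedGraph : Set (E × F)) := by
  rw [reducedGraph, Submodule.coe_inf, Submodule.prod_coe, Submodule.top_coe]
  exact hA.inter (A.ker.isClosed_orthogonal.prod isClosed_univ)

def reducedGraphSnd : A.reducedGraph →L[𝕜] F :=
  (ContinuousLinearMap.snd 𝕜 E F).comp A.reducedGraph.subtypeL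

theorem injective_reducedGraphSnd : Function.Injective A.reducedGraphSnd := by
  refine (injective_iff_map_eq_zero _).mpr ?_
  rintro ⟨p, hp⟩ hp0
  obtain ⟨x, hx, rfl⟩ := (A.mem_reducedGraph_iff).mp hp
  have hx0 : (x : E) = 0 :=
    Submodule.inf_orthogonal_eq_bot A.ker |>.le ⟨(coe_mem_ker_iff x).mpr hp0, hx⟩
  ext <;> simp_all

theorem range_reducedGraphSnd [A.ker.HasOrthogonalProjection] :
    Set.range A.reducedGraphSnd = LinearMap.range A.toFun := by
  ext y
  constructor
  · rintro ⟨⟨p, hp⟩, rfl⟩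
    obtain ⟨x, -, rfl⟩ := (A.mem_reducedGraph_iff).mp hp
    exact ⟨x, rfl⟩
  · rintro ⟨x, rfl⟩
    exact ⟨⟨_, A.sub_starProjection_mem_reducedGraph x⟩, rfl⟩

end ReducedGraph

section ClosedRange

variable {𝕜 E F : Type*} [RCLike 𝕜] [NormedAddCommGroup E] [InnerProductSpace 𝕜 E]
  [CompleteSpace E] [NormedAddCommGroup F] [NormedSpace 𝕜 F] {A : E →ₗ.[𝕜] F}

theorem IsClosed.hasOrthogonalProjection_ker (hA : A.IsClosed) : A.ker.HasOrthogonalProjection :=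
  have := hA.isClosed_ker.completeSpace_coe
  inferInstance

variable [CompleteSpace F]

theorem IsClosed.isClosed_range_iff_antilipschitz (hA : A.IsClosed) :
    _root_.IsClosed (LinearMap.range A.toFun : Set F) ↔
      ∃ K, AntilipschitzWith K A.reducedGraphSnd := by
  have := hA.hasOrthogonalProjection_ker
  have := hA.isClosed_reducedGraph.completeSpace_coe
  rw [← A.range_reducedGraphSnd]
  exact A.reducedGraphSnd.isClosed_range_iff_antilipschitz_of_injective
    A.injective_reducedGraphSnd

open scoped NNReal in
theorem IsClosed.exists_norm_le_of_isClosed_range (hA : A.IsClosed)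
    (hR : _root_.IsClosed (LinearMap.range A.toFun : Set F)) :
    ∃ C : ℝ≥0, ∀ x : A.domain, (x : E) ∈ A.kerᗮ → ‖(x : E)‖ ≤ C * ‖A x‖ := by
  obtain ⟨C, hC⟩ := hA.isClosed_range_iff_antilipschitz.mp hR
  refine ⟨C, fun x hx => ?_⟩
  calc ‖(x : E)‖ ≤ ‖((x : E), A x)‖ := norm_fst_le ((x : E), A x)
    _ ≤ C * ‖A x‖ := A.reducedGraphSnd.bound_of_antilipschitz hC
        ⟨_, (A.mem_reducedGraph_iff).mpr ⟨x, hx, rfl⟩⟩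

theorem IsClosed.isClosed_range_of_norm_le (hA : A.IsClosed) {C : ℝ}
    (hC : ∀ x : A.domain, (x : E) ∈ A.kerᗮ → ‖(x : E)‖ ≤ C * ‖A x‖) :
    _root_.IsClosed (LinearMap.range A.toFun : Set F) := by
  refine hA.isClosed_range_iff_antilipschitz.mpr
    ⟨(max C 1).toNNReal, A.reducedGraphSnd.antilipschitz_of_bound ?_⟩
  rintro ⟨_, hp⟩
  obtain ⟨x, hx, rfl⟩ := (A.mem_reducedGraph_iff).mp hp
  rw [Real.coe_toNNReal _ (le_max_of_le_right zero_le_one)]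
  change ‖((x : E), A x)‖ ≤ max C 1 * ‖A x‖
  rw [Prod.norm_mk]
  exact max_le ((hC x hx).trans (mul_le_mul_of_nonneg_right (le_max_left _ _) (norm_nonneg _)))
    (le_mul_of_one_le_left (norm_nonneg _) (le_max_right _ _))

end ClosedRange

section Adjoint

variable {𝕜 E F : Type*} [RCLike 𝕜] [NormedAddCommGroup E] [InnerProductSpace 𝕜 E]
  [CompleteSpace E] [NormedAddCommGroup F] [InnerProductSpace 𝕜 F] {A : E →ₗ.[𝕜] F}

theorem range_adjoint_le_orthogonal_ker (hd : Dense (A.domain : Set E)) :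
    LinearMap.range A†.toFun ≤ A.kerᗮ := by
  rintro _ ⟨v, rfl⟩ _ ⟨x, hx, rfl⟩
  have hx0 : A x = 0 := hx
  rw [← inner_conj_symm]
  simp [adjoint_isFormalAdjoint hd v x, hx0]

theorem IsClosed.mem_range_adjoint_of_mem_orthogonal_ker [CompleteSpace F]
    (hd : Dense (A.domain : Set E)) (hA : A.IsClosed)
    (hR : _root_.IsClosed (LinearMap.range A.toFun : Set F)) {y : E}
    (hy : y ∈ A.kerᗮ) : y ∈ LinearMap.range A†.toFun := by
  have := hA.hasOrthogonalProjection_ker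
  have := hA.isClosed_reducedGraph.completeSpace_coe
  have hR' : _root_.IsClosed (Set.range A.reducedGraphSnd) := A.range_reducedGraphSnd ▸ hR
  have : CompleteSpace A.reducedGraphSnd.range :=
    IsClosed.completeSpace_coe (hs := by rwa [LinearMap.coe_range])
  let e := A.reducedGraphSnd.equivRange A.injective_reducedGraphSnd hR'
  -- `φ (A x) = ⟪y, x⟫`, which is well defined because `y ⊥ ker A`
  let φ : StrongDual 𝕜 A.reducedGraphSnd.range :=
    innerSL 𝕜 y ∘L ContinuousLinearMap.fst 𝕜 E F ∘L A.reducedGraph.subtypeL ∘L e.symm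
  let v := (InnerProductSpace.toDual 𝕜 _).symm φ
  have hv : ∀ x : A.domain, inner 𝕜 (v : F) (A x) = inner 𝕜 y (x : E) := by
    intro x
    let p : A.reducedGraph := ⟨_, A.sub_starProjection_mem_reducedGraph x⟩
    calc inner 𝕜 (v : F) (A x) = inner 𝕜 v (e p) := rfl
      _ = φ (e p) := InnerProductSpace.toDual_symm_apply
      _ = inner 𝕜 y ((x : E) - A.ker.starProjection x) := by simp [φ, p]
      _ = inner 𝕜 y (x : E) := by
        rw [inner_sub_right, Submodule.inner_left_of_mem_orthogonal
          (A.ker.starProjection_apply_mem _) hy, sub_zero]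
  exact ⟨⟨v, mem_adjoint_domain_of_exists _ ⟨y, fun x => (hv x).symm⟩⟩,
    adjoint_apply_eq hd _ fun x => (hv x).symm⟩

end Adjoint

end LinearPMap

theorem ContinuousLinearMap.range_adjoint_le_orthogonal_ker {𝕜 E F : Type*} [RCLike 𝕜]
    [NormedAddCommGroup E] [InnerProductSpace 𝕜 E] [CompleteSpace E] [NormedAddCommGroup F]
    [InnerProductSpace 𝕜 F] [CompleteSpace F] (S : E →L[𝕜] F) :
    LinearMap.range (ContinuousLinearMap.adjoint S : F →ₗ[𝕜] E) ≤
      (LinearMap.ker (S : E →ₗ[𝕜] F))ᗮ :=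
  S.orthogonal_ker ▸ Submodule.le_topologicalClosure _

section SumWithBounded

variable {E : Type*} [NormedAddCommGroup E] [InnerProductSpace ℂ E]
  {T : E →ₗ.[ℂ] E} {S : E →L[ℂ] E} {a : ℝ}

theorem pmAddL_apply (x : T.domain) : pmAddL T S x = T x + S x := rfl

variable (S) in
theorem isClosed_pmAddL (hT : T.IsClosed) : (pmAddL T S).IsClosed := by
  have : ((pmAddL T S).graph : Set (E × E)) =
      (fun p : E × E => (p.1, p.2 - S p.1)) ⁻¹' T.graph := by
    ext ⟨x, w⟩
    simp only [Set.mem_preimage, SetLike.mem_coe, mem_graph_iff]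
    constructor
    · rintro ⟨u, rfl, rfl⟩
      exact ⟨u, rfl, (add_sub_cancel_right _ _).symm⟩
    · rintro ⟨u, rfl, hu⟩
      exact ⟨u, rfl, by rw [pmAddL_apply, hu, sub_add_cancel]⟩
  rw [LinearPMap.IsClosed, this]
  exact hT.preimage
    (continuous_fst.prodMk (continuous_snd.sub (S.continuous.comp continuous_fst)))

theorem ker_le_ker_of_norm_le (hbound : ∀ x : T.domain, ‖S x‖ ≤ a * ‖T x‖) :
    T.ker ≤ LinearMap.ker (S : E →ₗ[ℂ] E) := by
  rintro _ ⟨x, hx, rfl⟩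
  have hx0 : T x = 0 := hx
  simpa [hx0] using hbound x

theorem norm_le_norm_pmAddL (hbound : ∀ x : T.domain, ‖S x‖ ≤ a * ‖T x‖) (x : T.domain) :
    (1 - a) * ‖T x‖ ≤ ‖pmAddL T S x‖ := by
  have : ‖T x‖ ≤ ‖pmAddL T S x‖ + ‖S x‖ := by
    simpa [pmAddL_apply] using norm_sub_le (T x + S x) (S x)
  linarith [hbound x]

theorem ker_pmAddL (ha1 : a < 1) (hbound : ∀ x : T.domain, ‖S x‖ ≤ a * ‖T x‖) :
    (pmAddL T S).ker = T.ker := by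
  refine le_antisymm ?_ ?_
  · rintro _ ⟨x, hx, rfl⟩
    refine (coe_mem_ker_iff (A := T) x).mpr (norm_le_zero_iff.mp ?_)
    have := norm_le_norm_pmAddL hbound x
    rw [show pmAddL T S x = 0 from hx, norm_zero] at this
    nlinarith [norm_nonneg (T x)]
  · rintro _ ⟨x, hx, rfl⟩
    have hx0 : T x = 0 := hx
    refine (coe_mem_ker_iff (A := pmAddL T S) x).mpr ?_
    have hSx : S x = 0 := ker_le_ker_of_norm_le hbound ⟨x, hx, rfl⟩
    rw [pmAddL_apply, hx0, hSx, add_zero]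

theorem isClosed_range_pmAddL [CompleteSpace E] (hT : T.IsClosed)
    (hR : IsClosed (pmRange T : Set E)) (ha1 : a < 1)
    (hbound : ∀ x : T.domain, ‖S x‖ ≤ a * ‖T x‖) : IsClosed (pmRange (pmAddL T S) : Set E) := by
  obtain ⟨C, hC⟩ := hT.exists_norm_le_of_isClosed_range hR
  refine (isClosed_pmAddL S hT).isClosed_range_of_norm_le (C := C * (1 - a)⁻¹) fun x hx => ?_
  rw [ker_pmAddL ha1 hbound] at hx
  calc ‖(x : E)‖ ≤ C * ‖T x‖ := hC x hx
    _ ≤ C * ((1 - a)⁻¹ * ‖pmAddL T S x‖) := by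
        gcongr
        rw [le_inv_mul_iff₀ (sub_pos.mpr ha1)]
        exact norm_le_norm_pmAddL hbound x
    _ = C * (1 - a)⁻¹ * ‖pmAddL T S x‖ := (mul_assoc _ _ _).symm

theorem pmRange_pmAddL_le_sup :
    pmRange (pmAddL T S) ≤ pmRange T ⊔ LinearMap.range (S : E →ₗ[ℂ] E) := by
  rintro _ ⟨x, rfl⟩
  exact Submodule.add_mem_sup ⟨x, rfl⟩ ⟨x, rfl⟩

end SumWithBounded

theorem stmt12_general (T : H →ₗ.[ℂ] H) (S : H →L[ℂ] H) (a : ℝ) (ha1 : a < 1)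
    (hdense : Dense (T.domain : Set H))
    (hclosed : IsClosed (T.graph : Set (H × H)))
    (hTrange : IsClosed ((pmRange T : Submodule ℂ H) : Set H))
    (hTEP : pmRange T = pmRange T.adjoint)
    (hSEP : LinearMap.range (S : H →ₗ[ℂ] H) = LinearMap.range (ContinuousLinearMap.adjoint S : H →ₗ[ℂ] H))
    (hbound : ∀ x : T.domain, ‖S (x : H)‖ ≤ a * ‖T x‖) :
    IsClosed ((pmAddL T S).graph : Set (H × H)) ∧
      IsClosed ((pmRange (pmAddL T S) : Submodule ℂ H) : Set H) ∧
      pmRange (pmAddL T S) ≤ pmRange (pmAddL T S).adjoint := by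
  have hA : (pmAddL T S).IsClosed := isClosed_pmAddL S hclosed
  have hR := isClosed_range_pmAddL hclosed hTrange ha1 hbound
  have hTker : pmRange T ≤ T.kerᗮ := hTEP ▸ range_adjoint_le_orthogonal_ker hdense
  have hSker : LinearMap.range (S : H →ₗ[ℂ] H) ≤ T.kerᗮ :=
    hSEP ▸ S.range_adjoint_le_orthogonal_ker.trans
      (Submodule.orthogonal_le (ker_le_ker_of_norm_le hbound))
  refine ⟨hA, hR, fun z hz =>
    hA.mem_range_adjoint_of_mem_orthogonal_ker (A := pmAddL T S) hdense hR ?_⟩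
  rw [ker_pmAddL ha1 hbound]
  exact sup_le hTker hSker (pmRange_pmAddL_le_sup hz)

/-- Let `T` be a densely defined closed EP operator on a complex Hilbert space `H` and `S`
a bounded EP operator on `H` with `‖Sx‖ ≤ a‖Tx‖` for all `x ∈ D(T)` and some `0 < a < 1`.
Then `T + S` (defined on `D(T)`) is a closed operator with closed range and
`R(T + S) ⊆ R((T + S)*)`; that is, `T + S` is hypo-EP. -/
theorem stmt12 (T : H →ₗ.[ℂ] H) (S : H →L[ℂ] H) (a : ℝ) (ha0 : 0 < a) (ha1 : a < 1)
    (hdense : Dense (T.domain : Set H))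
    (hclosed : IsClosed (T.graph : Set (H × H)))
    (hTrange : IsClosed ((pmRange T : Submodule ℂ H) : Set H))
    (hTEP : pmRange T = pmRange T.adjoint)
    (hSrange : IsClosed ((LinearMap.range (S : H →ₗ[ℂ] H) : Submodule ℂ H) : Set H))
    (hSEP : LinearMap.range (S : H →ₗ[ℂ] H) = LinearMap.range (ContinuousLinearMap.adjoint S : H →ₗ[ℂ] H))
    (hbound : ∀ x : T.domain, ‖S (x : H)‖ ≤ a * ‖T x‖) :
    IsClosed ((pmAddL T S).graph : Set (H × H)) ∧
      IsClosed ((pmRange (pmAddL T S) : Submodule ℂ H) : Set H) ∧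
      pmRange (pmAddL T S) ≤ pmRange (pmAddL T S).adjoint :=
  stmt12_general T S a ha1 hdense hclosed hTrange hTEP hSEP hbound
end

section
/- Fix δ > 0 and let H be a complex Hilbert space. The set E_δ = { T : T is a bounded EP operator on H and γ(T) ≥ δ }, where γ(T) = inf{ ‖Tx‖ : x ∈ (ker T)ᗮ, ‖x‖ = 1 } is the reduced minimum modulus of T, is a closed subset of the space of bounded operators on H with the operator-norm topology. -/
/-!
An operator `T` lies in `E_δ` iff `δ ≤ ‖T‖`, `ker T = ker T†` and `δ ‖x‖ ≤ ‖T x‖` on `(ker T)ᗮ`.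
Indeed, the lower bound makes `R(T)` closed, and it forces `δ ‖y‖ ≤ ‖T† y‖` on
`R(T) = (ker T†)ᗮ`, so `R(T†)` is closed as well; with equal kernels the two closed ranges are then
both equal to `(ker T)ᗮ`.

Each of these conditions is a family of inequalities between continuous functions of `T`: since
`(ker T)ᗮ` is the closure of `R(T†)`, the lower bound says `δ ‖T† y‖ ≤ ‖T T† y‖` for all `y`, and
in its presence `ker T = ker T†` is equivalent to `δ ‖T† x‖ ≤ ‖T†‖ ‖T x‖` and
`δ ‖T x‖ ≤ ‖T‖ ‖T† x‖` for all `x`. Hence `E_δ` is an intersection of closed sets.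
-/

variable {H : Type*} [NormedAddCommGroup H] [InnerProductSpace ℂ H] [CompleteSpace H]

/-- A bounded operator on a complex Hilbert space is EP if its range is closed and coincides
with the range of its adjoint. -/
def IsEPBounded (A : H →L[ℂ] H) : Prop :=
  IsClosed ((LinearMap.range (A : H →ₗ[ℂ] H) : Submodule ℂ H) : Set H) ∧
    LinearMap.range (A : H →ₗ[ℂ] H) = LinearMap.range (ContinuousLinearMap.adjoint A : H →ₗ[ℂ] H)

/-- The reduced minimum modulus of a bounded operator:
`γ(T) = inf { ‖Tx‖ : x ∈ (ker T)ᗮ, ‖x‖ = 1 }`. -/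
noncomputable def redMinModulus (T : H →L[ℂ] H) : ℝ :=
  sInf ((fun x => ‖T x‖) '' {x : H | x ∈ (LinearMap.ker (T : H →ₗ[ℂ] H) : Submodule ℂ H)ᗮ ∧ ‖x‖ = 1})

open ContinuousLinearMap InnerProduct

section Normed

variable {𝕜 E F G : Type*} [RCLike 𝕜] [NormedAddCommGroup E] [NormedSpace 𝕜 E]
  [NormedAddCommGroup F] [NormedSpace 𝕜 F] [NormedAddCommGroup G] [NormedSpace 𝕜 G]

lemma bddBelow_image_norm {α : Type*} (f : α → F) (s : Set α) :
    BddBelow ((fun x => ‖f x‖) '' s) :=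
  ⟨0, by rintro _ ⟨y, -, rfl⟩; exact norm_nonneg _⟩

lemma forall_mem_norm_eq_one_le_norm_iff {K : Submodule 𝕜 E} {f : E →L[𝕜] F} {δ : ℝ} :
    (∀ x ∈ K, ‖x‖ = 1 → δ ≤ ‖f x‖) ↔ ∀ x ∈ K, δ * ‖x‖ ≤ ‖f x‖ := by
  refine ⟨fun h x hx => ?_, fun h x hx hx1 => by simpa [hx1] using h x hx⟩
  obtain rfl | hx0 := eq_or_ne x 0
  · simp
  have hu := h _ (K.smul_mem ((‖x‖ : 𝕜)⁻¹) hx) (norm_smul_inv_norm hx0)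
  rw [map_smul, norm_smul, norm_inv, RCLike.norm_ofReal, abs_norm, inv_mul_eq_div,
    le_div_iff₀ (norm_pos_iff.2 hx0)] at hu
  linarith

lemma ker_le_ker_of_mul_norm_le {S : E →L[𝕜] F} {T : E →L[𝕜] G} {δ c : ℝ} (hδ : 0 < δ)
    (h : ∀ x, δ * ‖S x‖ ≤ c * ‖T x‖) : T.ker ≤ S.ker := fun x hx => by
  have hx : T x = 0 := hx
  have hSx := h x
  rw [hx, norm_zero, mul_zero] at hSx
  exact norm_le_zero_iff.1 (nonpos_of_mul_nonpos_right hSx hδ)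

end Normed

section OrthogonalKer

variable {𝕜 E F G : Type*} [RCLike 𝕜] [NormedAddCommGroup E] [InnerProductSpace 𝕜 E]
  [CompleteSpace E] [NormedAddCommGroup F] [NormedSpace 𝕜 F] [NormedAddCommGroup G]
  [NormedSpace 𝕜 G]

lemma exists_mem_orthogonal_ker_apply_eq (T : E →L[𝕜] F) (x : E) :
    ∃ m ∈ T.kerᗮ, T m = T x := by
  obtain ⟨k, hk, m, hm, rfl⟩ := T.ker.exists_add_mem_mem_orthogonal x
  have hk : T k = 0 := hk
  exact ⟨m, hm, by rw [map_add, hk, zero_add]⟩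

lemma exists_mem_orthogonal_ker_norm_eq_one {T : E →L[𝕜] F} (hT : T ≠ 0) :
    ∃ x ∈ T.kerᗮ, ‖x‖ = 1 := by
  obtain ⟨v, hv⟩ : ∃ v, T v ≠ 0 := by
    by_contra! h
    exact hT (ext h)
  obtain ⟨m, hm, hTm⟩ := exists_mem_orthogonal_ker_apply_eq T v
  have hm0 : m ≠ 0 := by
    rintro rfl
    exact hv (by rw [← hTm, map_zero])
  exact ⟨(‖m‖ : 𝕜)⁻¹ • m, T.kerᗮ.smul_mem _ hm, norm_smul_inv_norm hm0⟩

lemma isClosed_range_of_mul_norm_le {T : E →L[𝕜] F} {δ : ℝ} (hδ : 0 < δ)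
    (h : ∀ x ∈ T.kerᗮ, δ * ‖x‖ ≤ ‖T x‖) : IsClosed (T.range : Set F) := by
  have hrange : (T.range : Set F) = Set.range (T ∘L T.kerᗮ.subtypeL) := by
    ext y
    refine ⟨fun ⟨x, hx⟩ => ?_, fun ⟨m, hm⟩ => ⟨m, hm⟩⟩
    obtain ⟨m, hm, hTm⟩ := exists_mem_orthogonal_ker_apply_eq T x
    exact ⟨⟨m, hm⟩, hTm.trans hx⟩
  have hanti : AntilipschitzWith δ⁻¹.toNNReal (T ∘L T.kerᗮ.subtypeL) :=
    (T ∘L T.kerᗮ.subtypeL).antilipschitz_of_bound fun m => by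
      rw [Real.coe_toNNReal _ (inv_nonneg.2 hδ.le), inv_mul_eq_div, le_div_iff₀ hδ, mul_comm]
      exact h m m.2
  rw [hrange]
  exact hanti.isClosed_range (T ∘L T.kerᗮ.subtypeL).uniformContinuous

lemma mul_norm_le_mul_norm_of_ker_le {T : E →L[𝕜] F} {S : E →L[𝕜] G} {δ : ℝ} (hδ : 0 ≤ δ)
    (hker : T.ker ≤ S.ker) (h : ∀ x ∈ T.kerᗮ, δ * ‖x‖ ≤ ‖T x‖) (x : E) :
    δ * ‖S x‖ ≤ ‖S‖ * ‖T x‖ := by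
  obtain ⟨k, hk, m, hm, rfl⟩ := T.ker.exists_add_mem_mem_orthogonal x
  have hTk : T k = 0 := hk
  have hSk : S k = 0 := hker hk
  rw [map_add, map_add, hTk, hSk, zero_add, zero_add]
  calc δ * ‖S m‖ ≤ δ * (‖S‖ * ‖m‖) := mul_le_mul_of_nonneg_left (S.le_opNorm m) hδ
    _ = ‖S‖ * (δ * ‖m‖) := by ring
    _ ≤ ‖S‖ * ‖T m‖ := mul_le_mul_of_nonneg_left (h m hm) (norm_nonneg S)

end OrthogonalKer

section Adjoint

variable {𝕜 E F : Type*} [RCLike 𝕜] [NormedAddCommGroup E] [InnerProductSpace 𝕜 E]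
  [CompleteSpace E] [NormedAddCommGroup F] [InnerProductSpace 𝕜 F] [CompleteSpace F]

lemma orthogonal_ker_adjoint_eq_range {T : E →L[𝕜] F} (h : IsClosed (T.range : Set F)) :
    (T†).kerᗮ = T.range := by
  rw [orthogonal_ker, adjoint_adjoint, h.submodule_topologicalClosure_eq]

-- For `y = T m` with `m ∈ (ker T)ᗮ`: `‖y‖² = ⟪T† y, m⟫ ≤ ‖T† y‖ ‖m‖ ≤ ‖T† y‖ ‖y‖ / δ`.
lemma mul_norm_le_norm_adjoint_of_mem_range {T : E →L[𝕜] F} {δ : ℝ} (hδ : 0 ≤ δ)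
    (h : ∀ x ∈ T.kerᗮ, δ * ‖x‖ ≤ ‖T x‖) : ∀ y ∈ T.range, δ * ‖y‖ ≤ ‖(T†) y‖ := by
  rintro _ ⟨x, rfl⟩
  obtain ⟨m, hm, hTm⟩ := exists_mem_orthogonal_ker_apply_eq T x
  rw [coe_coe, ← hTm]
  have hsq : ‖T m‖ ^ 2 ≤ ‖(T†) (T m)‖ * ‖m‖ := by
    rw [← inner_self_eq_norm_sq (𝕜 := 𝕜), ← adjoint_inner_left]
    exact (RCLike.re_le_norm _).trans (norm_inner_le_norm _ _)
  obtain h0 | hpos := (norm_nonneg (T m)).eq_or_lt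
  · rw [← h0, mul_zero]
    exact norm_nonneg _
  refine le_of_mul_le_mul_right ?_ hpos
  calc δ * ‖T m‖ * ‖T m‖ = δ * ‖T m‖ ^ 2 := by ring
    _ ≤ δ * (‖(T†) (T m)‖ * ‖m‖) := mul_le_mul_of_nonneg_left hsq hδ
    _ = ‖(T†) (T m)‖ * (δ * ‖m‖) := by ring
    _ ≤ ‖(T†) (T m)‖ * ‖T m‖ := mul_le_mul_of_nonneg_left (h m hm) (norm_nonneg _)

lemma mul_norm_le_norm_adjoint_of_mem_orthogonal_ker {T : E →L[𝕜] F} {δ : ℝ} (hδ : 0 < δ)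
    (h : ∀ x ∈ T.kerᗮ, δ * ‖x‖ ≤ ‖T x‖) : ∀ y ∈ (T†).kerᗮ, δ * ‖y‖ ≤ ‖(T†) y‖ := by
  rw [orthogonal_ker_adjoint_eq_range (isClosed_range_of_mul_norm_le hδ h)]
  exact mul_norm_le_norm_adjoint_of_mem_range hδ.le h

lemma forall_mem_orthogonal_ker_mul_norm_le_iff {T : E →L[𝕜] F} {δ : ℝ} :
    (∀ x ∈ T.kerᗮ, δ * ‖x‖ ≤ ‖T x‖) ↔ ∀ y, δ * ‖(T†) y‖ ≤ ‖T ((T†) y)‖ := by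
  refine ⟨fun h y => h _ ?_, fun h x hx => ?_⟩
  · rw [orthogonal_ker]
    exact T†.range.le_topologicalClosure ⟨y, rfl⟩
  · have hclosed : IsClosed {x : E | δ * ‖x‖ ≤ ‖T x‖} := isClosed_le (by fun_prop) (by fun_prop)
    rw [orthogonal_ker] at hx
    exact closure_minimal (by rintro _ ⟨y, rfl⟩; exact h y) hclosed hx

lemma ker_eq_ker_adjoint_and_mul_norm_le_iff {T : E →L[𝕜] E} {δ : ℝ} (hδ : 0 < δ) :
    (T.ker = (T†).ker ∧ ∀ x ∈ T.kerᗮ, δ * ‖x‖ ≤ ‖T x‖) ↔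
      (∀ y, δ * ‖(T†) y‖ ≤ ‖T ((T†) y)‖) ∧ (∀ x, δ * ‖(T†) x‖ ≤ ‖T†‖ * ‖T x‖) ∧
        ∀ x, δ * ‖T x‖ ≤ ‖T‖ * ‖(T†) x‖ := by
  constructor
  · rintro ⟨hker, h⟩
    exact ⟨forall_mem_orthogonal_ker_mul_norm_le_iff.1 h,
      mul_norm_le_mul_norm_of_ker_le hδ.le hker.le h,
      mul_norm_le_mul_norm_of_ker_le hδ.le hker.ge
        (mul_norm_le_norm_adjoint_of_mem_orthogonal_ker hδ h)⟩
  · rintro ⟨h, hadj, hself⟩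
    exact ⟨le_antisymm (ker_le_ker_of_mul_norm_le hδ hadj) (ker_le_ker_of_mul_norm_le hδ hself),
      forall_mem_orthogonal_ker_mul_norm_le_iff.2 h⟩

end Adjoint

lemma redMinModulus_le_norm {V : Type*} [NormedAddCommGroup V] [InnerProductSpace ℂ V]
    (T : V →L[ℂ] V) : redMinModulus T ≤ ‖T‖ := by
  rw [redMinModulus]
  obtain hempty | ⟨x, hx⟩ := {x : V | x ∈ T.kerᗮ ∧ ‖x‖ = 1}.eq_empty_or_nonempty
  · rw [hempty, Set.image_empty, Real.sInf_empty]
    exact norm_nonneg T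
  · refine (csInf_le (bddBelow_image_norm T _) (Set.mem_image_of_mem _ hx)).trans ?_
    simpa [hx.2] using T.le_opNorm x

lemma le_redMinModulus_iff {T : H →L[ℂ] H} (hT : T ≠ 0) {δ : ℝ} :
    δ ≤ redMinModulus T ↔ ∀ x ∈ T.kerᗮ, δ * ‖x‖ ≤ ‖T x‖ := by
  have hne : {x : H | x ∈ T.kerᗮ ∧ ‖x‖ = 1}.Nonempty := by
    obtain ⟨u, hu, hu1⟩ := exists_mem_orthogonal_ker_norm_eq_one hT
    exact ⟨u, hu, hu1⟩
  rw [redMinModulus, le_csInf_iff (bddBelow_image_norm T _) (hne.image _), Set.forall_mem_image,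
    ← forall_mem_norm_eq_one_le_norm_iff]
  simp only [Set.mem_ofPred_eq, and_imp]

lemma IsEPBounded.ker_eq_ker_adjoint {T : H →L[ℂ] H} (hT : IsEPBounded T) :
    T.ker = (T†).ker := by
  rw [← orthogonal_range, hT.2, orthogonal_range, adjoint_adjoint]

lemma isEPBounded_of_ker_eq_ker_adjoint {T : H →L[ℂ] H} {δ : ℝ} (hδ : 0 < δ)
    (hker : T.ker = (T†).ker) (h : ∀ x ∈ T.kerᗮ, δ * ‖x‖ ≤ ‖T x‖) : IsEPBounded T := by
  have hclosed := isClosed_range_of_mul_norm_le hδ h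
  have hclosed_adj :=
    isClosed_range_of_mul_norm_le hδ (mul_norm_le_norm_adjoint_of_mem_orthogonal_ker hδ h)
  have hrange_adj : T.kerᗮ = (T†).range := by
    simpa only [adjoint_adjoint] using orthogonal_ker_adjoint_eq_range hclosed_adj
  exact ⟨hclosed, by rw [← orthogonal_ker_adjoint_eq_range hclosed, ← hker, hrange_adj]⟩

lemma isEPBounded_and_le_redMinModulus_iff {T : H →L[ℂ] H} {δ : ℝ} (hδ : 0 < δ) :
    IsEPBounded T ∧ δ ≤ redMinModulus T ↔
      δ ≤ ‖T‖ ∧ T.ker = (T†).ker ∧ ∀ x ∈ T.kerᗮ, δ * ‖x‖ ≤ ‖T x‖ := by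
  constructor
  · rintro ⟨hEP, hγ⟩
    have hnorm : δ ≤ ‖T‖ := hγ.trans (redMinModulus_le_norm T)
    have hT : T ≠ 0 := norm_pos_iff.1 (hδ.trans_le hnorm)
    exact ⟨hnorm, hEP.ker_eq_ker_adjoint, (le_redMinModulus_iff hT).1 hγ⟩
  · rintro ⟨hnorm, hker, h⟩
    have hT : T ≠ 0 := norm_pos_iff.1 (hδ.trans_le hnorm)
    exact ⟨isEPBounded_of_ker_eq_ker_adjoint hδ hker h, (le_redMinModulus_iff hT).2 h⟩

/-- For a fixed `δ > 0`, the set `E_δ` of all bounded EP operators `T` on a complex Hilbert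
space with `γ(T) ≥ δ` is a closed subset of `B(H)` (with the operator-norm topology). -/
theorem stmt15 (δ : ℝ) (hδ : 0 < δ) :
    IsClosed {T : H →L[ℂ] H | IsEPBounded T ∧ δ ≤ redMinModulus T} := by
  simp_rw [isEPBounded_and_le_redMinModulus_iff hδ, ker_eq_ker_adjoint_and_mul_norm_le_iff hδ,
    Set.ofPred_and, Set.ofPred_forall]
  refine (isClosed_le ?_ ?_).inter ((isClosed_iInter fun y => isClosed_le ?_ ?_).inter
    ((isClosed_iInter fun x => isClosed_le ?_ ?_).inter
      (isClosed_iInter fun x => isClosed_le ?_ ?_))) <;> fun_prop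
end
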